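/- Let d ≥ 1, Pe ∈ ℝ, let v : ℝ^d → ℝ^d be a continuously differentiable, ℤ^d-periodic, divergence-free vector field, and let w ∈ ℝ^d. Suppose that for every ξ ∈ ℝ^d there exists a twice continuously differentiable, ℤ^d-periodic function χ_ξ : ℝ^d → ℝ satisfying Pe v(y)·∇χ_ξ(y) − Δχ_ξ(y) = (w − Pe v(y))·ξ for all y ∈ ℝ^d. Then w equals the drift velocity formula: w = Pe ∫_{[0,1]^d} v(y) dy. -/

import Mathlib

open MeasureTheory

private lemma fderiv_periodic_shift {d : ℕ} {E : Type*} [NormedAddCommGroup E]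
    [NormedSpace ℝ E] {F : (Fin d → ℝ) → E} (hF : Differentiable ℝ F)
    (c : Fin d → ℝ) (h : ∀ y, F (y + c) = F y) (y : Fin d → ℝ) :
    fderiv ℝ F (y + c) = fderiv ℝ F y := by
  have h1 : HasFDerivAt (fun z => F (z + c)) (fderiv ℝ F (y + c)) y := by
    have := (hF (y + c)).hasFDerivAt.comp y ((hasFDerivAt_id y).add_const c)
    exact this
  have h2 : (fun z => F (z + c)) = F := funext h
  rw [h2] at h1
  exact h1.fderiv.symm


/-- For `d ≥ 1`, `Pe ∈ ℝ`, a `C¹`, `ℤ^d`-periodic,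
divergence-free vector field `v : ℝ^d → ℝ^d` and `w ∈ ℝ^d`: if for every
`ξ ∈ ℝ^d` there is a `C²`, `ℤ^d`-periodic solution `χ_ξ` of
`Pe v·∇χ_ξ − Δχ_ξ = (w − Pe v)·ξ`, then `w = Pe ∫_{[0,1]^d} v(y) dy`
(the drift velocity formula). -/
theorem drift_velocity_formula
    (d : ℕ) (hd : 1 ≤ d) (Pe : ℝ)
    (v : (Fin d → ℝ) → (Fin d → ℝ))
    (hv : ContDiff ℝ 1 v)
    (hvper : ∀ (y : Fin d → ℝ) (k : Fin d → ℤ), v (y + fun i => (k i : ℝ)) = v y)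
    (hdiv : ∀ y : Fin d → ℝ,
      ∑ i : Fin d, fderiv ℝ (fun z => v z i) y (Pi.single i 1) = 0)
    (w : Fin d → ℝ)
    (hsol : ∀ ξ : Fin d → ℝ, ∃ χ : (Fin d → ℝ) → ℝ,
      ContDiff ℝ 2 χ ∧
      (∀ (y : Fin d → ℝ) (k : Fin d → ℤ), χ (y + fun i => (k i : ℝ)) = χ y) ∧
      (∀ y : Fin d → ℝ,
        Pe * (∑ i : Fin d, v y i * fderiv ℝ χ y (Pi.single i 1))
          - ∑ i : Fin d, fderiv ℝ (fun z => fderiv ℝ χ z (Pi.single i 1)) y (Pi.single i 1)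
        = ∑ i : Fin d, (w i - Pe * v y i) * ξ i)) :
    w = Pe • ∫ y in Set.Icc (0 : Fin d → ℝ) 1, v y := by
  obtain ⟨n, rfl⟩ : ∃ n, d = n + 1 := ⟨d - 1, (Nat.succ_pred_eq_of_pos hd).symm⟩
  have hvc : Continuous v := hv.continuous
  have hvint : IntegrableOn v (Set.Icc (0 : Fin (n+1) → ℝ) 1) volume :=
    hvc.continuousOn.integrableOn_compact isCompact_Icc
  have hvicomp : ∀ j : Fin (n+1),
      IntegrableOn (fun y => v y j) (Set.Icc (0 : Fin (n+1) → ℝ) 1) volume :=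
    fun j => ((continuous_apply j).comp hvc).continuousOn.integrableOn_compact isCompact_Icc
  have hle : (0 : Fin (n+1) → ℝ) ≤ 1 := fun i => zero_le_one
  -- translation between integer shift and Pi.single
  have hsingle : ∀ i : Fin (n+1),
      (fun t => (((Pi.single i 1 : Fin (n+1) → ℤ) t : ℝ))) = Pi.single i (1:ℝ) := by
    intro i; funext t
    rcases eq_or_ne t i with rfl | ht
    · simp
    · simp [Pi.single_apply, ht]
  have hins : ∀ (i : Fin (n+1)) (x : Fin n → ℝ),
      Fin.insertNth i (1:ℝ) x =
        Fin.insertNth i (0:ℝ) x + fun t => (((Pi.single i 1 : Fin (n+1) → ℤ) t : ℝ)) := by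
    intro i x
    rw [hsingle]
    funext t
    refine Fin.succAboveCases i ?_ ?_ t
    · simp
    · intro m
      simp [Pi.single_apply, (Fin.succAbove_ne i m)]
  -- the key componentwise identity
  have key : ∀ j : Fin (n+1),
      w j = Pe * ∫ y in Set.Icc (0 : Fin (n+1) → ℝ) 1, v y j := by
    intro j
    obtain ⟨χ, hχ, hχper, hpde⟩ := hsol (Pi.single j 1)
    set D : (Fin (n+1) → ℝ) → (Fin (n+1) → ℝ) →L[ℝ] ℝ := fderiv ℝ χ with hDdef
    have hχd : Differentiable ℝ χ := hχ.differentiable two_ne_zero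
    have hD : ContDiff ℝ 1 D := hχ.fderiv_right (by norm_num)
    have hDd : Differentiable ℝ D := hD.differentiable one_ne_zero
    set f : (Fin (n+1) → ℝ) → (Fin (n+1) → ℝ) :=
      fun y i => Pe * (χ y * v y i) - D y (Pi.single i 1) with hfdef
    have hvi : ∀ i, ContDiff ℝ 1 fun z => v z i := fun i => contDiff_pi.1 hv i
    have hf : ContDiff ℝ 1 f := by
      refine contDiff_pi.2 fun i => ContDiff.sub ?_ ?_
      · exact contDiff_const.mul ((hχ.of_le one_le_two).mul (hvi i))
      · exact hD.clm_apply contDiff_const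
    -- componentwise derivative
    have hfcomp : ∀ (y : Fin (n+1) → ℝ) (i : Fin (n+1)),
        fderiv ℝ (fun z => f z i) y (Pi.single i 1)
          = Pe * (χ y * fderiv ℝ (fun z => v z i) y (Pi.single i 1)
              + v y i * D y (Pi.single i 1))
            - fderiv ℝ (fun z => D z (Pi.single i 1)) y (Pi.single i 1) := by
      intro y i
      have hvid : DifferentiableAt ℝ (fun z => v z i) y := (hvi i).differentiable one_ne_zero y
      have h1 : DifferentiableAt ℝ (fun z => χ z * v z i) y := (hχd y).mul hvid
      have h2 : DifferentiableAt ℝ (fun z => D z (Pi.single i 1)) y :=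
        (hDd y).clm_apply (differentiableAt_const _)
      have : (fun z => f z i) = fun z => Pe * (χ z * v z i) - D z (Pi.single i 1) := rfl
      rw [this, fderiv_fun_sub (h1.const_mul Pe) h2, fderiv_const_mul h1 Pe,
        fderiv_fun_mul (hχd y) hvid]
      simp only [ContinuousLinearMap.sub_apply, ContinuousLinearMap.smul_apply,
        ContinuousLinearMap.add_apply, smul_eq_mul, ← hDdef]
    -- the divergence of f
    have hdivf : ∀ y : Fin (n+1) → ℝ,
        (∑ i : Fin (n+1), fderiv ℝ f y (Pi.single i 1) i) = w j - Pe * v y j := by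
      intro y
      have hcomp : ∀ i, DifferentiableAt ℝ (fun z => f z i) y := fun i =>
        ((contDiff_pi.1 hf i).differentiable one_ne_zero) y
      have hπ : fderiv ℝ f y =
          ContinuousLinearMap.pi (fun i => fderiv ℝ (fun z => f z i) y) := fderiv_pi hcomp
      have e1 : ∀ i : Fin (n+1), fderiv ℝ f y (Pi.single i 1) i
          = fderiv ℝ (fun z => f z i) y (Pi.single i 1) := by
        intro i; rw [hπ]; rfl
      calc (∑ i : Fin (n+1), fderiv ℝ f y (Pi.single i 1) i)
          = ∑ i : Fin (n+1),
              ((Pe * χ y) * fderiv ℝ (fun z => v z i) y (Pi.single i 1)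
                + (Pe * (v y i * D y (Pi.single i 1))
                  - fderiv ℝ (fun z => D z (Pi.single i 1)) y (Pi.single i 1))) := by
            refine Finset.sum_congr rfl fun i _ => ?_
            rw [e1 i, hfcomp y i]; ring
        _ = (Pe * χ y) * (∑ i : Fin (n+1), fderiv ℝ (fun z => v z i) y (Pi.single i 1))
              + (Pe * (∑ i : Fin (n+1), v y i * D y (Pi.single i 1))
                - ∑ i : Fin (n+1),
                    fderiv ℝ (fun z => D z (Pi.single i 1)) y (Pi.single i 1)) := by
            rw [Finset.sum_add_distrib, ← Finset.mul_sum, Finset.sum_sub_distrib,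
              ← Finset.mul_sum]
        _ = w j - Pe * v y j := by
            rw [hdiv y, mul_zero, zero_add, hpde y]
            simp [Pi.single_apply, mul_ite]
    -- periodicity of f
    have hDper : ∀ (y : Fin (n+1) → ℝ) (k : Fin (n+1) → ℤ),
        D (y + fun i => (k i : ℝ)) = D y := fun y k =>
      fderiv_periodic_shift hχd _ (fun z => hχper z k) y
    have hfper : ∀ (y : Fin (n+1) → ℝ) (k : Fin (n+1) → ℤ),
        f (y + fun i => (k i : ℝ)) = f y := by
      intro y k; funext i
      show Pe * (χ _ * v _ i) - D _ (Pi.single i 1) = _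
      rw [hχper y k, hvper y k, hDper y k]
    -- divergence theorem
    have Hi : IntegrableOn (fun x => ∑ i : Fin (n+1), fderiv ℝ f x (Pi.single i 1) i)
        (Set.Icc (0 : Fin (n+1) → ℝ) 1) volume := by
      have : (fun x => ∑ i : Fin (n+1), fderiv ℝ f x (Pi.single i 1) i)
          = fun x => w j - Pe * v x j := funext hdivf
      rw [this]
      exact (continuous_const.sub (continuous_const.mul
        ((continuous_apply j).comp hvc))).continuousOn.integrableOn_compact isCompact_Icc
    have hdt := integral_divergence_of_hasFDerivAt_off_countable
      (a := (0 : Fin (n+1) → ℝ)) (b := 1) hle f (fun x => fderiv ℝ f x) ∅ Set.countable_empty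
      hf.continuous.continuousOn
      (fun x _ => (hf.differentiable one_ne_zero x).hasFDerivAt) Hi
    have hfaces : (∑ i : Fin (n+1),
        ((∫ x in Set.Icc ((0 : Fin (n+1) → ℝ) ∘ Fin.succAbove i)
              ((1 : Fin (n+1) → ℝ) ∘ Fin.succAbove i),
            f (Fin.insertNth i ((1 : Fin (n+1) → ℝ) i) x) i)
          - ∫ x in Set.Icc ((0 : Fin (n+1) → ℝ) ∘ Fin.succAbove i)
              ((1 : Fin (n+1) → ℝ) ∘ Fin.succAbove i),
            f (Fin.insertNth i ((0 : Fin (n+1) → ℝ) i) x) i)) = 0 := by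
      refine Finset.sum_eq_zero fun i _ => ?_
      have heq : ∀ x : Fin n → ℝ,
          f (Fin.insertNth i ((1 : Fin (n+1) → ℝ) i) x) i
            = f (Fin.insertNth i ((0 : Fin (n+1) → ℝ) i) x) i := by
        intro x
        have : ((1 : Fin (n+1) → ℝ) i) = (1:ℝ) := rfl
        rw [this, hins i x]
        have := hfper (Fin.insertNth i (0:ℝ) x) (Pi.single i 1)
        exact congrFun this i
      simp only [heq, sub_self]
    have h00 : (∫ x in Set.Icc (0 : Fin (n+1) → ℝ) 1,
        ∑ i : Fin (n+1), fderiv ℝ f x (Pi.single i 1) i) = 0 := hdt.trans hfaces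
    have h0 : (∫ x in Set.Icc (0 : Fin (n+1) → ℝ) 1, (w j - Pe * v x j)) = 0 := by
      rw [← h00]
      exact setIntegral_congr_fun measurableSet_Icc (fun x _ => (hdivf x).symm)
    rw [integral_sub (integrableOn_const (C := w j) (s := Set.Icc (0 : Fin (n+1) → ℝ) 1) (μ := volume) (
        (isCompact_Icc.measure_lt_top.ne)))
      ((hvicomp j).const_mul Pe)] at h0
    rw [setIntegral_const, measureReal_def, Real.volume_Icc_pi_toReal hle] at h0
    simp only [Pi.one_apply, Pi.zero_apply, sub_zero, Finset.prod_const_one, one_smul,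
      smul_eq_mul] at h0
    have := sub_eq_zero.1 h0
    rw [← integral_const_mul, ← this, one_mul]
  -- conclude
  funext j
  rw [Pi.smul_apply, smul_eq_mul, key j]
  congr 1
  exact (ContinuousLinearMap.proj (R := ℝ) (φ := fun _ : Fin (n+1) => ℝ)
    j).integral_comp_comm hvint
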